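/- arXiv:2405.09486 — 3 statements merged into one kernel-verified Lean document; each statement's English description precedes it below -/
import Mathlib

section
/- Let H be a graph on n vertices, c > 0, C > 0, and s ≥ 1. Suppose that for every vertex v with degree d_H(v) ≥ C log n, the neighborhood N_H(v) contains at least c·d_H(v)^s independent sets of size s. Then Σ_{S ∈ 𝓘} |N_H(S)| ≥ c·n^{1-s}·(2e(H) − Cn log n)^s, where 𝓘 is the family of independent s-sets of H. -/
open scoped Classical
open Real

noncomputable def commonNbr {V : Type*} [Fintype V] (H : SimpleGraph V) (S : Finset V) :
    Finset V :=
  Finset.univ.filter fun v => ∀ u ∈ S, H.Adj u v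

/-!
Double counting turns `Σ_{S ∈ 𝓘} |N_H(S)|` into `Σ_v #{S ∈ 𝓘 : S ⊆ N_H(v)}`, which is at least
`c · Σ_v g(v)^s`, where `g` is the degree truncated to `0` below `C log n`. Truncation loses at
most `C n log n` of the degree sum `2e(H)`, and the power-mean inequality
`Σ_v g(v)^s ≥ n^{1-s} (Σ_v g(v))^s` finishes.
-/

open Finset

theorem Finset.sum_le_sum_filter_le_add_card_mul {ι : Type*} (s : Finset ι) (f : ι → ℝ)
    {t : ℝ} (ht : 0 ≤ t) :
    ∑ i ∈ s, f i ≤ ∑ i ∈ s with t ≤ f i, f i + #s * t := by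
  rw [← sum_filter_add_sum_filter_not s (fun i => t ≤ f i)]
  have hsmall : ∑ i ∈ s with ¬ t ≤ f i, f i ≤ #s * t :=
    calc ∑ i ∈ s with ¬ t ≤ f i, f i
        ≤ #(s.filter fun i => ¬ t ≤ f i) * t := by
          rw [← nsmul_eq_mul]
          exact sum_le_card_nsmul _ _ _ fun i hi => (not_le.1 (mem_filter.1 hi).2).le
      _ ≤ #s * t := by gcongr; exact filter_subset _ _
  linarith

theorem Finset.card_rpow_one_sub_mul_pow_sum_le_sum_pow {ι : Type*} (s : Finset ι) {f : ι → ℝ}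
    (hf : ∀ i ∈ s, 0 ≤ f i) {k : ℕ} (hk : 1 ≤ k) :
    (#s : ℝ) ^ ((1 : ℝ) - k) * (∑ i ∈ s, f i) ^ k ≤ ∑ i ∈ s, f i ^ k := by
  obtain ⟨m, rfl⟩ := Nat.exists_eq_add_of_le' hk
  have hexp : (1 : ℝ) - ↑(m + 1) = -(m : ℝ) := by push_cast; ring
  rw [hexp, Real.rpow_neg (Nat.cast_nonneg _), Real.rpow_natCast, inv_mul_eq_div]
  exact pow_sum_div_card_le_sum_pow hf m

theorem sum_card_commonNbr {V : Type*} [Fintype V] [DecidableEq V] (H : SimpleGraph V)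
    (𝓘 : Finset (Finset V)) :
    ∑ S ∈ 𝓘, #(commonNbr H S) = ∑ v, #(𝓘.filter fun S => S ⊆ H.neighborFinset v) := by
  simp only [commonNbr, card_filter]
  rw [sum_comm]
  refine sum_congr rfl fun v _ => sum_congr rfl fun S _ => ?_
  simp only [subset_iff, SimpleGraph.mem_neighborFinset, H.adj_comm]

theorem sum_common_nbr_lower_general {n : ℕ} (H : SimpleGraph (Fin n)) (s : ℕ) (hs : 1 ≤ s)
    (c C : ℝ) (hc : 0 < c) (hC : 0 < C)
    (𝓘 : Finset (Finset (Fin n)))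
    (hedges : C * n * Real.log n ≤ 2 * H.edgeFinset.card)
    (hnbhd : ∀ v : Fin n, C * Real.log n ≤ H.degree v →
      c * (H.degree v : ℝ) ^ s
        ≤ ((𝓘.filter fun S => S ⊆ H.neighborFinset v).card : ℝ)) :
    c * (n : ℝ) ^ ((1 : ℝ) - s) * (2 * H.edgeFinset.card - C * n * Real.log n) ^ s
      ≤ ∑ S ∈ 𝓘, ((commonNbr H S).card : ℝ) := by
  set t := C * Real.log n
  let g : Fin n → ℝ := fun v => if t ≤ H.degree v then (H.degree v : ℝ) else 0
  have hg_nonneg : ∀ v ∈ univ, 0 ≤ g v := fun v _ => by dsimp only [g]; split_ifs <;> positivity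
  have hsum_g : 2 * (H.edgeFinset.card : ℝ) - C * n * Real.log n ≤ ∑ v, g v := by
    have hdeg : ∑ v, (H.degree v : ℝ) = 2 * H.edgeFinset.card := by
      exact_mod_cast H.sum_degrees_eq_twice_card_edges
    have htrunc := univ.sum_le_sum_filter_le_add_card_mul (fun v => (H.degree v : ℝ))
      (mul_nonneg hC.le (Real.log_natCast_nonneg n))
    rw [sum_filter, card_univ, Fintype.card_fin, hdeg] at htrunc
    linarith
  have hexcess_nonneg : 0 ≤ 2 * (H.edgeFinset.card : ℝ) - C * n * Real.log n :=
    sub_nonneg.2 hedges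
  have hg_count : ∀ v ∈ univ, c * g v ^ s ≤ #(𝓘.filter fun S => S ⊆ H.neighborFinset v) := by
    intro v _
    dsimp only [g]
    split_ifs with hv
    · exact hnbhd v hv
    · rw [zero_pow (by omega), mul_zero]; positivity
  calc c * (n : ℝ) ^ ((1 : ℝ) - s) * (2 * H.edgeFinset.card - C * n * Real.log n) ^ s
      ≤ c * ((#(univ : Finset (Fin n)) : ℝ) ^ ((1 : ℝ) - s) * (∑ v, g v) ^ s) := by
        rw [card_univ, Fintype.card_fin, mul_assoc]
        gcongr
    _ ≤ c * ∑ v, g v ^ s := by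
        gcongr; exact univ.card_rpow_one_sub_mul_pow_sum_le_sum_pow hg_nonneg hs
    _ ≤ ∑ v, (#(𝓘.filter fun S => S ⊆ H.neighborFinset v) : ℝ) := by
        rw [mul_sum]; exact sum_le_sum hg_count
    _ = ∑ S ∈ 𝓘, ((commonNbr H S).card : ℝ) := by
        rw [← Nat.cast_sum, ← Nat.cast_sum, sum_card_commonNbr]

/-- If every vertex `v` of degree at least `C log n` has at least `c·d_H(v)^s`
independent `s`-sets inside its neighborhood, then
`Σ_{S ∈ 𝓘} |N_H(S)| ≥ c·n^{1-s}·(2e(H) − C·n·log n)^s`. -/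
theorem sum_common_nbr_lower {n : ℕ} (H : SimpleGraph (Fin n)) (s : ℕ) (hs : 1 ≤ s)
    (c C : ℝ) (hc : 0 < c) (hC : 0 < C)
    (𝓘 : Finset (Finset (Fin n)))
    (h𝓘 : 𝓘 = (Finset.univ.powersetCard s).filter
      fun S => ∀ u ∈ S, ∀ v ∈ S, ¬ H.Adj u v)
    (hedges : C * n * Real.log n ≤ 2 * H.edgeFinset.card)
    (hnbhd : ∀ v : Fin n, C * Real.log n ≤ H.degree v →
      c * (H.degree v : ℝ) ^ s
        ≤ ((𝓘.filter fun S => S ⊆ H.neighborFinset v).card : ℝ)) :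
    c * (n : ℝ) ^ ((1 : ℝ) - s) * (2 * H.edgeFinset.card - C * n * Real.log n) ^ s
      ≤ ∑ S ∈ 𝓘, ((commonNbr H S).card : ℝ) :=
  sum_common_nbr_lower_general H s hs c C hc hC 𝓘 hedges hnbhd
end

section
/- Let H be a graph on n vertices with no induced copy of K_{s,t}, and suppose every vertex subset A of H with |A| ≥ C log n contains at least c|A|^s independent sets of size s and at least one independent set of size t (for constants c, C > 0, and s,t ≥ 1). Then e(H) ≤ C' n^{2−1/s} (log n)^{1/s} for some constant C' depending only on c, C, s, t. -/
open scoped Classical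
open Real

noncomputable def indepCountIn {V : Type*} (G : SimpleGraph V) (s : ℕ) (A : Finset V) : ℕ :=
  ((A.powersetCard s).filter fun S => ∀ u ∈ S, ∀ v ∈ S, ¬ G.Adj u v).card

lemma exists_embedding_of_sets {n s t : ℕ} (H : SimpleGraph (Fin n)) (S T : Finset (Fin n))
    (hS : S.card = s) (hT : T.card = t)
    (hSind : ∀ u ∈ S, ∀ v ∈ S, ¬ H.Adj u v) (hTind : ∀ u ∈ T, ∀ v ∈ T, ¬ H.Adj u v)
    (hadj : ∀ u ∈ S, ∀ v ∈ T, H.Adj u v) :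
    Nonempty ((completeBipartiteGraph (Fin s) (Fin t)) ↪g H) := by
  have hdisj : ∀ x, x ∈ S → x ∈ T → False := fun x hx hx' =>
    H.loopless.irrefl x (hadj x hx x hx')
  set eS := S.orderIsoOfFin hS with heS
  set eT := T.orderIsoOfFin hT with heT
  refine ⟨⟨⟨Sum.elim (fun i => (eS i : Fin n)) (fun j => (eT j : Fin n)), ?_⟩, ?_⟩⟩
  · rintro (a | a) (b | b) h <;> simp only [Sum.elim_inl, Sum.elim_inr] at h
    · have : eS a = eS b := Subtype.ext h
      simpa using eS.injective this
    · exact absurd (h ▸ (eS a).2) (fun hx => hdisj _ hx (eT b).2)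
    · exact absurd (h ▸ (eT a).2) (fun hx => hdisj _ (eS b).2 hx)
    · have : eT a = eT b := Subtype.ext h
      simpa using eT.injective this
  · rintro (a | a) (b | b) <;>
      simp only [Function.Embedding.coeFn_mk, Sum.elim_inl, Sum.elim_inr,
        completeBipartiteGraph, Sum.isLeft_inl, Sum.isRight_inl, Sum.isLeft_inr,
        Sum.isRight_inr] <;>
      constructor <;> intro h
    · exact absurd h (hSind _ (eS a).2 _ (eS b).2)
    · simp at h
    · trivial
    · exact hadj _ (eS a).2 _ (eT b).2
    · trivial
    · exact (hadj _ (eS b).2 _ (eT a).2).symm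
    · exact absurd h (hTind _ (eT a).2 _ (eT b).2)
    · simp at h

lemma exists_of_indepCountIn_pos {V : Type*} (G : SimpleGraph V) (k : ℕ) (A : Finset V)
    (h : 1 ≤ indepCountIn G k A) :
    ∃ T, T ⊆ A ∧ T.card = k ∧ ∀ u ∈ T, ∀ v ∈ T, ¬ G.Adj u v := by
  unfold indepCountIn at h
  obtain ⟨T, hT⟩ := Finset.card_pos.mp h
  simp only [Finset.mem_filter, Finset.mem_powersetCard] at hT
  exact ⟨T, hT.1.1, hT.1.2, hT.2⟩

/-- If `H` has no induced copy of `K_{s,t}` and every vertex set of size at least `C log n`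
contains at least `c|A|^s` independent `s`-sets and an independent `t`-set, then
`e(H) ≤ C' n^{2-1/s} (log n)^{1/s}` for a constant `C' = C'(c, C, s, t)`. -/
theorem ex_induced_complete_bipartite (s t : ℕ) (hs : 1 ≤ s) (ht : 1 ≤ t)
    (c C : ℝ) (hc : 0 < c) (hC : 0 < C) :
    ∃ C' : ℝ, 0 < C' ∧ ∀ (n : ℕ) (H : SimpleGraph (Fin n)),
      IsEmpty ((completeBipartiteGraph (Fin s) (Fin t)) ↪g H) →
      (∀ A : Finset (Fin n), C * Real.log n ≤ A.card →
        c * (A.card : ℝ) ^ s ≤ (indepCountIn H s A : ℝ) ∧ 1 ≤ indepCountIn H t A) →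
      (H.edgeFinset.card : ℝ) ≤ C' * (n : ℝ) ^ ((2 : ℝ) - 1 / s) * (Real.log n) ^ ((1 : ℝ) / s) := by
  have hs0 : (s : ℝ) ≠ 0 := Nat.cast_ne_zero.mpr (by omega)
  have hsR : (1 : ℝ) ≤ (s : ℝ) := by exact_mod_cast hs
  set a : ℝ := 1 / s with ha
  have ha0 : 0 < a := by positivity
  have ha1 : a ≤ 1 := by
    rw [ha, div_le_one (by positivity)]; exact hsR
  refine ⟨C + (C / c) ^ a + C ^ a + 1, by positivity, ?_⟩
  intro n H hemb hA
  -- trivial small case: n ≤ 1 yields a contradiction with the hypothesis on A = ∅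
  rcases le_or_gt n 1 with hn1 | hn1
  · exfalso
    have hlog : Real.log n ≤ 0 := by
      interval_cases n <;> simp
    have h0 : C * Real.log n ≤ (((∅ : Finset (Fin n)).card : ℝ)) := by
      simpa using mul_nonpos_of_nonneg_of_nonpos hC.le hlog
    have h1 := (hA ∅ h0).2
    have : indepCountIn H t (∅ : Finset (Fin n)) = 0 := by
      unfold indepCountIn
      rw [Finset.powersetCard_eq_empty.mpr (by simp; omega), Finset.filter_empty,
        Finset.card_empty]
    omega
  -- now n ≥ 2
  have hn2 : (2 : ℕ) ≤ n := hn1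
  have hN1 : (1 : ℝ) < (n : ℝ) := by exact_mod_cast hn1
  have hN0 : (0 : ℝ) < (n : ℝ) := by linarith
  have hlg : 0 < Real.log n := Real.log_pos hN1
  set N : ℝ := (n : ℝ) with hNdef
  set Lg : ℝ := Real.log n with hLgdef
  have hLgN : Lg ≤ N := by
    have := Real.log_le_sub_one_of_pos hN0
    linarith
  have hpos2 : (0:ℝ) ≤ N ^ ((2:ℝ) - 1/(s:ℝ)) * Lg ^ a :=
    mul_nonneg (Real.rpow_nonneg hN0.le _) (Real.rpow_nonneg hlg.le _)
  -- degrees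
  have hdegsum : ∑ v : Fin n, (H.degree v : ℝ) = 2 * (H.edgeFinset.card : ℝ) := by
    exact_mod_cast congrArg (Nat.cast : ℕ → ℝ) H.sum_degrees_eq_twice_card_edges
  have hcard_le : (H.edgeFinset.card : ℝ) ≤ ∑ v : Fin n, (H.degree v : ℝ) := by
    rw [hdegsum]
    have h0 : (0:ℝ) ≤ (H.edgeFinset.card : ℝ) := Nat.cast_nonneg _
    linarith
  -- key identity : N^2-a-related
  have hpowsplit : N * N ^ ((1:ℝ) - a) = N ^ ((2:ℝ) - a) := by
    rw [show (2:ℝ) - a = 1 + (1 - a) by ring, Real.rpow_add hN0, Real.rpow_one]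
  rcases lt_or_ge N (C * Lg) with hNL | hNL
  · -- vacuous case: every subset is smaller than C log n
    have hdegle : ∀ v : Fin n, (H.degree v : ℝ) ≤ N := by
      intro v
      have h : H.degree v ≤ n := by
        rw [← H.card_neighborFinset_eq_degree]
        simpa using Finset.card_le_univ (H.neighborFinset v)
      show (H.degree v : ℝ) ≤ (n : ℝ)
      exact_mod_cast h
    have h1 : (H.edgeFinset.card : ℝ) ≤ N * N := by
      calc (H.edgeFinset.card : ℝ) ≤ ∑ v : Fin n, (H.degree v : ℝ) := hcard_le
        _ ≤ ∑ _v : Fin n, N := Finset.sum_le_sum fun v _ => hdegle v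
        _ = N * N := by simp [mul_comm, hNdef]
    have h2 : N * N = N ^ ((2:ℝ) - a) * N ^ a := by
      rw [← Real.rpow_add hN0, show (2:ℝ) - a + a = ((2:ℕ):ℝ) by push_cast; ring,
        Real.rpow_natCast]
      ring
    have h3 : N ^ a ≤ (C * Lg) ^ a := Real.rpow_le_rpow hN0.le hNL.le ha0.le
    have h4 : (C * Lg) ^ a = C ^ a * Lg ^ a := Real.mul_rpow hC.le hlg.le
    calc (H.edgeFinset.card : ℝ) ≤ N ^ ((2:ℝ) - a) * (C ^ a * Lg ^ a) := by
          rw [← h4]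
          calc (H.edgeFinset.card : ℝ) ≤ N * N := h1
            _ = N ^ ((2:ℝ) - a) * N ^ a := h2
            _ ≤ N ^ ((2:ℝ) - a) * (C * Lg) ^ a :=
                mul_le_mul_of_nonneg_left h3 (by positivity)
      _ ≤ (C + (C / c) ^ a + C ^ a + 1) * N ^ ((2:ℝ) - 1/(s:ℝ)) * Lg ^ ((1:ℝ)/(s:ℝ)) := by
          have : N ^ ((2:ℝ) - a) * (C ^ a * Lg ^ a) = C ^ a * (N ^ ((2:ℝ) - a) * Lg ^ a) := by ring
          rw [this]
          have hfac : C ^ a ≤ C + (C / c) ^ a + C ^ a + 1 := by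
            have h1 : 0 ≤ (C / c) ^ a := Real.rpow_nonneg (by positivity) a
            linarith
          calc C ^ a * (N ^ ((2:ℝ) - a) * Lg ^ a)
              ≤ (C + (C / c) ^ a + C ^ a + 1) * (N ^ ((2:ℝ) - a) * Lg ^ a) :=
                mul_le_mul_of_nonneg_right hfac hpos2
            _ = (C + (C / c) ^ a + C ^ a + 1) * N ^ ((2:ℝ) - 1/(s:ℝ)) * Lg ^ ((1:ℝ)/(s:ℝ)) := by
                rw [ha]; ring
  · -- main case: C * Lg ≤ N
    obtain ⟨p, rfl⟩ : ∃ p, s = p + 1 := ⟨s - 1, by omega⟩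
    set B : Finset (Fin n) := Finset.univ.filter (fun v => C * Lg ≤ (H.degree v : ℝ)) with hB
    set I : Finset (Finset (Fin n)) :=
      (Finset.univ.powersetCard (p+1)).filter (fun S => ∀ u ∈ S, ∀ v ∈ S, ¬ H.Adj u v) with hI
    set com : Finset (Fin n) → Finset (Fin n) :=
      fun S => Finset.univ.filter (fun v => S ⊆ H.neighborFinset v) with hcomdef
    -- Step 1: every independent (p+1)-set has a small common neighborhood
    have hcom : ∀ S ∈ I, ((com S).card : ℝ) ≤ C * Lg := by
      intro S hS
      by_contra hlt
      push_neg at hlt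
      have hSle : C * Lg ≤ ((com S).card : ℝ) := hlt.le
      have hmem := Finset.mem_filter.mp hS
      have hScard : S.card = p + 1 := (Finset.mem_powersetCard.mp hmem.1).2
      have hSind : ∀ u ∈ S, ∀ v ∈ S, ¬ H.Adj u v := hmem.2
      have h1 : 1 ≤ indepCountIn H t (com S) := (hA (com S) hSle).2
      obtain ⟨T, hTsub, hTcard, hTind⟩ := exists_of_indepCountIn_pos H t (com S) h1
      have hadj : ∀ u ∈ S, ∀ v ∈ T, H.Adj u v := by
        intro u hu v hv
        have hvc := hTsub hv
        rw [hcomdef, Finset.mem_filter] at hvc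
        exact (H.mem_neighborFinset v u).mp (hvc.2 hu) |>.symm
      exact hemb.false
        (exists_embedding_of_sets H S T hScard hTcard hSind hTind hadj).some
    -- Step 2: double counting
    have hpt : ∀ v : Fin n, indepCountIn H (p+1) (H.neighborFinset v)
        = (I.filter (fun S => S ⊆ H.neighborFinset v)).card := by
      intro v
      unfold indepCountIn
      congr 1
      ext S
      simp only [hI, Finset.mem_filter, Finset.mem_powersetCard, Finset.subset_univ, true_and]
      tauto
    have hswap : ∑ v : Fin n, indepCountIn H (p+1) (H.neighborFinset v)
        = ∑ S ∈ I, (com S).card := by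
      simp only [hpt]
      calc ∑ v : Fin n, (I.filter (fun S => S ⊆ H.neighborFinset v)).card
          = ∑ v : Fin n, ∑ S ∈ I, (if S ⊆ H.neighborFinset v then 1 else 0) :=
            Finset.sum_congr rfl fun v _ => Finset.card_filter _ _
        _ = ∑ S ∈ I, ∑ v : Fin n, (if S ⊆ H.neighborFinset v then 1 else 0) :=
            Finset.sum_comm
        _ = ∑ S ∈ I, (com S).card := by
            refine Finset.sum_congr rfl fun S _ => ?_
            rw [hcomdef]
            exact (Finset.card_filter _ _).symm
    -- Step 3: degree hypothesis for high-degree vertices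
    have hAbig : ∀ v ∈ B, c * (H.degree v : ℝ) ^ (p+1)
        ≤ (indepCountIn H (p+1) (H.neighborFinset v) : ℝ) := by
      intro v hv
      have hv' : C * Lg ≤ (H.degree v : ℝ) := (Finset.mem_filter.mp hv).2
      have h := (hA (H.neighborFinset v) (by rwa [H.card_neighborFinset_eq_degree])).1
      rwa [H.card_neighborFinset_eq_degree] at h
    have hIcard : (I.card : ℝ) ≤ N ^ (p+1) := by
      have h1 : I.card ≤ ((Finset.univ : Finset (Fin n)).powersetCard (p+1)).card :=
        Finset.card_filter_le _ _
      have h2 : ((Finset.univ : Finset (Fin n)).powersetCard (p+1)).card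
          = n.choose (p+1) := by
        rw [Finset.card_powersetCard]; simp
      have h3 : n.choose (p+1) ≤ n ^ (p+1) := Nat.choose_le_pow n (p+1)
      have : I.card ≤ n ^ (p+1) := by omega
      calc (I.card : ℝ) ≤ ((n ^ (p+1) : ℕ) : ℝ) := by exact_mod_cast this
        _ = N ^ (p+1) := by push_cast; rfl
    have hCL0 : (0:ℝ) ≤ C * Lg := mul_nonneg hC.le hlg.le
    have hsum_pow : ∑ v ∈ B, (H.degree v : ℝ) ^ (p+1) ≤ N ^ (p+1) * (C * Lg) / c := by
      rw [le_div_iff₀ hc, mul_comm (∑ v ∈ B, (H.degree v : ℝ) ^ (p+1)) c]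
      calc c * ∑ v ∈ B, (H.degree v : ℝ) ^ (p+1)
          = ∑ v ∈ B, c * (H.degree v : ℝ) ^ (p+1) := Finset.mul_sum _ _ _
        _ ≤ ∑ v ∈ B, (indepCountIn H (p+1) (H.neighborFinset v) : ℝ) :=
            Finset.sum_le_sum hAbig
        _ ≤ ∑ v : Fin n, (indepCountIn H (p+1) (H.neighborFinset v) : ℝ) := by
            apply Finset.sum_le_sum_of_subset_of_nonneg (Finset.subset_univ _)
            intros
            positivity
        _ = ∑ S ∈ I, ((com S).card : ℝ) := by exact_mod_cast hswap
        _ ≤ ∑ _S ∈ I, (C * Lg) := Finset.sum_le_sum hcom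
        _ = I.card * (C * Lg) := by rw [Finset.sum_const, nsmul_eq_mul]
        _ ≤ N ^ (p+1) * (C * Lg) := mul_le_mul_of_nonneg_right hIcard hCL0
    set X : ℝ := ∑ v ∈ B, (H.degree v : ℝ) with hX
    have hX0 : 0 ≤ X := Finset.sum_nonneg fun v _ => Nat.cast_nonneg _
    -- power mean
    have hkey : X ^ (p+1) ≤ N ^ p * ∑ v ∈ B, (H.degree v : ℝ) ^ (p+1) := by
      rcases Finset.eq_empty_or_nonempty B with hBe | hBne
      · rw [hX, hBe]
        simp
      · have h := pow_sum_div_card_le_sum_pow (s := B)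
          (f := fun v => (H.degree v : ℝ)) (fun i _ => Nat.cast_nonneg _) p
        have hBpos : (0:ℝ) < (B.card : ℝ) ^ p := by
          have := Finset.card_pos.mpr hBne
          positivity
        rw [div_le_iff₀ hBpos] at h
        have hcardn : (B.card : ℝ) ≤ N := by
          have h' : B.card ≤ n := le_of_le_of_eq (Finset.card_le_univ B) (by simp)
          rw [hNdef]
          exact_mod_cast h'
        have hcardN : ((B.card : ℝ)) ^ p ≤ N ^ p :=
          pow_le_pow_left₀ (Nat.cast_nonneg _) hcardn p
        calc X ^ (p+1) ≤ (∑ v ∈ B, (H.degree v : ℝ) ^ (p+1)) * (B.card : ℝ) ^ p := h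
          _ ≤ (∑ v ∈ B, (H.degree v : ℝ) ^ (p+1)) * N ^ p := by
              apply mul_le_mul_of_nonneg_left hcardN
              exact Finset.sum_nonneg fun v _ => by positivity
          _ = N ^ p * ∑ v ∈ B, (H.degree v : ℝ) ^ (p+1) := mul_comm _ _
    have hXs : X ^ (p+1) ≤ N ^ (2*p+1) * (C * Lg) / c := by
      calc X ^ (p+1) ≤ N ^ p * ∑ v ∈ B, (H.degree v : ℝ) ^ (p+1) := hkey
        _ ≤ N ^ p * (N ^ (p+1) * (C * Lg) / c) :=
            mul_le_mul_of_nonneg_left hsum_pow (by positivity)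
        _ = N ^ (2*p+1) * (C * Lg) / c := by
            rw [show 2*p+1 = p + (p+1) by ring, pow_add]
            ring
    -- extract the (p+1)-st root
    have hXroot : X ≤ (N ^ (2*p+1) * (C * Lg) / c) ^ a := by
      have h1 : X = (X ^ (p+1)) ^ a := by
        rw [← Real.rpow_natCast X (p+1), ← Real.rpow_mul hX0, ha,
          mul_one_div, div_self hs0, Real.rpow_one]
      rw [h1]
      exact Real.rpow_le_rpow (by positivity) hXs ha0.le
    -- low-degree vertices
    have hsmall : ∑ v ∈ Finset.univ.filter (fun v => ¬ C * Lg ≤ (H.degree v : ℝ)),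
        (H.degree v : ℝ) ≤ N * (C * Lg) := by
      calc ∑ v ∈ Finset.univ.filter (fun v => ¬ C * Lg ≤ (H.degree v : ℝ)),
            (H.degree v : ℝ)
          ≤ ∑ _v ∈ Finset.univ.filter (fun v => ¬ C * Lg ≤ (H.degree v : ℝ)), (C * Lg) :=
            Finset.sum_le_sum fun v hv => (not_le.mp (Finset.mem_filter.mp hv).2).le
        _ = ((Finset.univ.filter (fun v => ¬ C * Lg ≤ (H.degree v : ℝ))).card : ℝ)
            * (C * Lg) := by rw [Finset.sum_const, nsmul_eq_mul]
        _ ≤ N * (C * Lg) := by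
            apply mul_le_mul_of_nonneg_right _ hCL0
            have h : (Finset.univ.filter (fun v => ¬ C * Lg ≤ (H.degree v : ℝ))).card ≤ n :=
              le_of_le_of_eq (Finset.card_le_univ _) (by simp)
            rw [hNdef]
            exact_mod_cast h
    have hsplit : ∑ v : Fin n, (H.degree v : ℝ)
        = X + ∑ v ∈ Finset.univ.filter (fun v => ¬ C * Lg ≤ (H.degree v : ℝ)),
            (H.degree v : ℝ) := by
      rw [hX, hB]
      exact (Finset.sum_filter_add_sum_filter_not _ _ _).symm
    have hfinal : (H.edgeFinset.card : ℝ)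
        ≤ N * (C * Lg) + (N ^ (2*p+1) * (C * Lg) / c) ^ a := by
      calc (H.edgeFinset.card : ℝ) ≤ ∑ v : Fin n, (H.degree v : ℝ) := hcard_le
        _ = X + ∑ v ∈ Finset.univ.filter (fun v => ¬ C * Lg ≤ (H.degree v : ℝ)),
            (H.degree v : ℝ) := hsplit
        _ ≤ (N ^ (2*p+1) * (C * Lg) / c) ^ a + N * (C * Lg) := add_le_add hXroot hsmall
        _ = N * (C * Lg) + (N ^ (2*p+1) * (C * Lg) / c) ^ a := add_comm _ _
    have hterm1 : N * (C * Lg) ≤ C * (N ^ ((2:ℝ) - a) * Lg ^ a) := by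
      have h1 : Lg = Lg ^ a * Lg ^ (1 - a) := by
        rw [← Real.rpow_add hlg, show a + (1-a) = 1 by ring, Real.rpow_one]
      have h2 : Lg ^ (1-a) ≤ N ^ (1-a) :=
        Real.rpow_le_rpow hlg.le hLgN (by linarith)
      calc N * (C * Lg) = C * (N * (Lg ^ a * Lg ^ (1-a))) := by rw [← h1]; ring
        _ ≤ C * (N * (Lg ^ a * N ^ (1-a))) := by
            apply mul_le_mul_of_nonneg_left _ hC.le
            apply mul_le_mul_of_nonneg_left _ hN0.le
            exact mul_le_mul_of_nonneg_left h2 (Real.rpow_nonneg hlg.le a)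
        _ = C * (N ^ ((2:ℝ) - a) * Lg ^ a) := by
            rw [← hpowsplit]
            ring
    have hterm2 : (N ^ (2*p+1) * (C * Lg) / c) ^ a
        = (C / c) ^ a * (N ^ ((2:ℝ) - a) * Lg ^ a) := by
      have hremix : N ^ (2*p+1) * (C * Lg) / c = (N ^ (2*p+1)) * ((C/c) * Lg) := by ring
      rw [hremix, Real.mul_rpow (by positivity) (mul_nonneg (by positivity) hlg.le),
        Real.mul_rpow (by positivity) hlg.le]
      have hNp : ((N ^ (2*p+1) : ℝ)) ^ a = N ^ ((2:ℝ) - a) := by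
        rw [← Real.rpow_natCast N (2*p+1), ← Real.rpow_mul hN0.le]
        congr 1
        rw [ha]
        have hcast : ((2*p+1 : ℕ) : ℝ) = 2 * ((p+1 : ℕ) : ℝ) - 1 := by push_cast; ring
        rw [hcast]
        field_simp
        try ring
      rw [hNp]
      ring
    calc (H.edgeFinset.card : ℝ)
        ≤ N * (C * Lg) + (N ^ (2*p+1) * (C * Lg) / c) ^ a := hfinal
      _ ≤ C * (N ^ ((2:ℝ) - a) * Lg ^ a) + (C/c) ^ a * (N ^ ((2:ℝ) - a) * Lg ^ a) :=
          add_le_add hterm1 (le_of_eq hterm2)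
      _ = (C + (C/c) ^ a) * (N ^ ((2:ℝ) - a) * Lg ^ a) := by ring
      _ ≤ (C + (C/c) ^ a + C ^ a + 1) * (N ^ ((2:ℝ) - a) * Lg ^ a) := by
          apply mul_le_mul_of_nonneg_right _ hpos2
          have h1 : 0 ≤ C ^ a := Real.rpow_nonneg hC.le a
          linarith
      _ = (C + (C / c) ^ a + C ^ a + 1) * N ^ ((2:ℝ) - 1/((p+1:ℕ):ℝ))
          * Lg ^ ((1:ℝ)/((p+1:ℕ):ℝ)) := by
          rw [ha]
          push_cast
          ring
end

section
/- Let s ≥ 1, c, C > 0, and let H be a graph on n vertices with no induced K_{s,t}. Suppose there exists an independent s-set S in H with |N_H(S)| ≥ c·n^{1−2s}·(2e(H) − Cn log n)^s (common neighborhood lower bound from averaging). If additionally every vertex set of size ≥ C log n contains an independent t-set, then |N_H(S)| < C log n, and hence e(H) ≤ C' n^{2−1/s}(log n)^{1/s} for a suitable constant C' = C'(c, C, s). -/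
open scoped Classical
open Real

lemma exists_emb {n s t : ℕ} (H : SimpleGraph (Fin n)) (S T : Finset (Fin n))
    (hS : S.card = s) (hT : T.card = t)
    (hSind : ∀ u ∈ S, ∀ v ∈ S, ¬ H.Adj u v) (hTind : ∀ u ∈ T, ∀ v ∈ T, ¬ H.Adj u v)
    (hST : ∀ u ∈ S, ∀ v ∈ T, H.Adj u v) :
    Nonempty ((completeBipartiteGraph (Fin s) (Fin t)) ↪g H) := by
  let eS : Fin s ≃ {x // x ∈ S} := ((S.equivFin).trans (finCongr hS)).symm
  let eT : Fin t ≃ {x // x ∈ T} := ((T.equivFin).trans (finCongr hT)).symm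
  let f : Fin s ⊕ Fin t → Fin n := Sum.elim (fun i => (eS i : Fin n)) (fun j => (eT j : Fin n))
  have hdisj : ∀ u, u ∈ S → u ∈ T → False := fun u hu hu' =>
    H.irrefl (hST u hu u hu')
  have hinj : Function.Injective f := by
    rintro (i | i) (j | j) h <;>
      simp only [f, Sum.elim_inl, Sum.elim_inr] at h
    · have := Subtype.coe_injective h
      simp only [EmbeddingLike.apply_eq_iff_eq] at this
      exact congrArg Sum.inl this
    · exact (hdisj _ (eS i).2 (by rw [h]; exact (eT j).2)).elim
    · exact (hdisj _ (eS j).2 (by rw [← h]; exact (eT i).2)).elim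
    · have := Subtype.coe_injective h
      simp only [EmbeddingLike.apply_eq_iff_eq] at this
      exact congrArg Sum.inr this
  refine ⟨⟨⟨f, hinj⟩, ?_⟩⟩
  rintro (i | i) (j | j) <;>
    simp only [f, Function.Embedding.coeFn_mk, Sum.elim_inl, Sum.elim_inr]
  · exact iff_of_false (hSind _ (eS i).2 _ (eS j).2) (by simp)
  · exact iff_of_true (hST _ (eS i).2 _ (eT j).2) (by simp)
  · exact iff_of_true (H.adj_symm (hST _ (eS j).2 _ (eT i).2)) (by simp)
  · exact iff_of_false (hTind _ (eT i).2 _ (eT j).2) (by simp)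

/-- If `H` has no induced `K_{s,t}`, `S` is an independent `s`-set whose common neighborhood
satisfies `|N_H(S)| ≥ c·n^{1−2s}·(2e(H) − C n log n)^s`, and every vertex set of size at
least `C log n` contains an independent `t`-set, then `|N_H(S)| < C log n`, and hence
`e(H) ≤ C'·n^{2−1/s}·(log n)^{1/s}` for a constant `C' = C'(c, C, s)`. -/
theorem common_nbr_small_and_edge_bound (s t : ℕ) (hs : 1 ≤ s) (ht : 1 ≤ t)
    (c C : ℝ) (hc : 0 < c) (hC : 0 < C) :
    ∃ C' : ℝ, 0 < C' ∧
      ∀ (n : ℕ) (H : SimpleGraph (Fin n)) (S : Finset (Fin n)),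
        IsEmpty ((completeBipartiteGraph (Fin s) (Fin t)) ↪g H) →
        S.card = s → (∀ u ∈ S, ∀ v ∈ S, ¬ H.Adj u v) →
        (c * (n : ℝ) ^ ((1 : ℝ) - 2 * s)
            * (2 * (H.edgeFinset.card : ℝ) - C * n * Real.log n) ^ s
          ≤ ((commonNbr H S).card : ℝ)) →
        (∀ A : Finset (Fin n), C * Real.log n ≤ (A.card : ℝ) →
          ∃ T ⊆ A, T.card = t ∧ ∀ u ∈ T, ∀ v ∈ T, ¬ H.Adj u v) →
        ((commonNbr H S).card : ℝ) < C * Real.log n ∧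
          (H.edgeFinset.card : ℝ)
            ≤ C' * (n : ℝ) ^ ((2 : ℝ) - 1 / s) * (Real.log n) ^ ((1 : ℝ) / s) := by
  have hs0 : (s : ℝ) ≠ 0 := by positivity
  refine ⟨(C / c) ^ ((1 : ℝ) / s) + C, by positivity, ?_⟩
  intro n H S hEmpty hScard hSind hlow hA
  -- log n is positive, else hA applied to ∅ gives a contradiction
  have hL : 0 < Real.log n := by
    by_contra h
    push_neg at h
    obtain ⟨T, hTsub, hTcard, -⟩ := hA ∅ (by
      simpa using mul_nonpos_of_nonneg_of_nonpos hC.le h)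
    have : T = ∅ := Finset.subset_empty.mp hTsub
    rw [this] at hTcard
    simp at hTcard
    omega
  have hn1 : (1 : ℝ) < n := by
    by_contra h
    push_neg at h
    exact absurd (Real.log_nonpos (by positivity) h) (not_le.mpr hL)
  have hn0 : (0 : ℝ) < n := lt_trans one_pos hn1
  -- Part 1
  have part1 : ((commonNbr H S).card : ℝ) < C * Real.log n := by
    by_contra h
    push_neg at h
    obtain ⟨T, hTsub, hTcard, hTind⟩ := hA (commonNbr H S) h
    have hST : ∀ u ∈ S, ∀ v ∈ T, H.Adj u v := by
      intro u hu v hv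
      have hv' := hTsub hv
      simp only [commonNbr, Finset.mem_filter] at hv'
      exact hv'.2 u hu
    exact hEmpty.false (exists_emb H S T hScard hTcard hSind hTind hST).some
  refine ⟨part1, ?_⟩
  -- Part 2
  set L : ℝ := Real.log n with hLdef
  set M : ℝ := (n : ℝ) ^ ((2 : ℝ) - 1 / s) * L ^ ((1 : ℝ) / s) with hMdef
  have hM0 : 0 ≤ M := by positivity
  have hexp : (0 : ℝ) ≤ 1 - 1 / s := by
    have : (1 : ℝ) ≤ s := by exact_mod_cast hs
    have : 1 / (s : ℝ) ≤ 1 := by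
      rw [div_le_one (by positivity)]; exact this
    linarith
  have hLn : L ≤ (n : ℝ) := Real.log_le_self hn0.le
  -- key: n * L ≤ M
  have hM : (n : ℝ) * L ≤ M := by
    have e1 : L ^ ((1 : ℝ) - 1 / s) ≤ (n : ℝ) ^ ((1 : ℝ) - 1 / s) :=
      Real.rpow_le_rpow hL.le hLn hexp
    calc (n : ℝ) * L = (n : ℝ) * (L ^ ((1 : ℝ) / s) * L ^ ((1 : ℝ) - 1 / s)) := by
          rw [← Real.rpow_add hL]
          norm_num
      _ ≤ (n : ℝ) * (L ^ ((1 : ℝ) / s) * (n : ℝ) ^ ((1 : ℝ) - 1 / s)) := by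
          have h1 : (0 : ℝ) ≤ L ^ ((1 : ℝ) / s) := by positivity
          exact mul_le_mul_of_nonneg_left
            (mul_le_mul_of_nonneg_left e1 h1) hn0.le
      _ = M := by
          rw [hMdef]
          rw [show (2 : ℝ) - 1 / s = 1 + (1 - 1 / s) by ring, Real.rpow_add hn0,
            Real.rpow_one]
          ring
  set X : ℝ := 2 * (H.edgeFinset.card : ℝ) - C * n * L with hXdef
  have hK0 : (0 : ℝ) ≤ (C / c) ^ ((1 : ℝ) / s) := by positivity
  rcases le_or_gt X 0 with hX | hX
  · -- 2e ≤ C n L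
    nlinarith [hM, hM0, mul_le_mul_of_nonneg_left hM hC.le]
  · -- 0 < X
    have hkey : c * (n : ℝ) ^ ((1 : ℝ) - 2 * s) * X ^ s < C * L := lt_of_le_of_lt hlow part1
    set P : ℝ := (n : ℝ) ^ ((2 : ℝ) * s - 1) with hPdef
    have hP0 : 0 < P := Real.rpow_pos_of_pos hn0 _
    have hPinv : (n : ℝ) ^ ((1 : ℝ) - 2 * s) = P⁻¹ := by
      rw [hPdef, ← Real.rpow_neg hn0.le]
      ring_nf
    rw [hPinv] at hkey
    have hXs : X ^ s < C / c * L * P := by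
      rw [div_mul_eq_mul_div, div_mul_eq_mul_div, lt_div_iff₀ hc]
      calc X ^ s * c = (c * P⁻¹ * X ^ s) * P := by
            field_simp
        _ < C * L * P := by
            exact mul_lt_mul_of_pos_right hkey hP0
    have hXlt : X < (C / c) ^ ((1 : ℝ) / s) * M := by
      have h1 : X ^ ((s : ℝ)) < C / c * L * P := by
        rwa [Real.rpow_natCast]
      have h2 : (X ^ ((s : ℝ))) ^ ((1 : ℝ) / s) < (C / c * L * P) ^ ((1 : ℝ) / s) :=
        Real.rpow_lt_rpow (by positivity) h1 (by positivity)
      have h3 : (X ^ ((s : ℝ))) ^ ((1 : ℝ) / s) = X := by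
        rw [← Real.rpow_mul hX.le, mul_one_div, div_self hs0, Real.rpow_one]
      have h4 : (C / c * L * P) ^ ((1 : ℝ) / s)
          = (C / c) ^ ((1 : ℝ) / s) * L ^ ((1 : ℝ) / s) * P ^ ((1 : ℝ) / s) := by
        rw [Real.mul_rpow (by positivity) hP0.le,
          Real.mul_rpow (by positivity) hL.le]
      have h5 : P ^ ((1 : ℝ) / s) = (n : ℝ) ^ ((2 : ℝ) - 1 / s) := by
        rw [hPdef, ← Real.rpow_mul hn0.le]
        congr 1
        field_simp
      rw [h3, h4, h5] at h2
      calc X < (C / c) ^ ((1 : ℝ) / s) * L ^ ((1 : ℝ) / s)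
            * (n : ℝ) ^ ((2 : ℝ) - 1 / s) := h2
        _ = (C / c) ^ ((1 : ℝ) / s) * M := by rw [hMdef]; ring
    nlinarith [hM, hM0, hK0, hXlt, mul_le_mul_of_nonneg_left hM hC.le]
end
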